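/- Characterisation of the uniform reflection along an epimorphism: let M and L be frames, h : M → L an injective frame homomorphism, and 𝒰 a set of covers of M that is admissible, i.e. every u ∈ M satisfies u = ⨆ {v | ∃ U ∈ 𝒰, st(v,U) ≤ u}. Then the image of h equals the set {a ∈ L | a = ⨆ {b | ∃ U ∈ 𝒰, st(b, h '' U) ≤ a}}. -/
import Mathlib


/-- The star of `a` with respect to a subset `U`: the join of all members of `U` meeting `a`. -/
def frameStar {L : Type*} [Order.Frame L] (U : Set L) (a : L) : L :=
  sSup {u | u ∈ U ∧ a ⊓ u ≠ ⊥}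

theorem uniform_reflection_char
    {M L : Type*} [Order.Frame M] [Order.Frame L]
    (h : FrameHom M L) (hinj : Function.Injective h)
    (𝒰 : Set (Set M)) (hcov : ∀ U ∈ 𝒰, sSup U = ⊤)
    (hadm : ∀ u : M, u = sSup {v | ∃ U ∈ 𝒰, frameStar U v ≤ u}) :
    Set.range h = {a : L | a = sSup {b | ∃ U ∈ 𝒰, frameStar (h '' U) b ≤ a}} := by
  have hbot : ∀ x : M, h x = ⊥ ↔ x = ⊥ := by
    intro x
    constructor
    · intro hx; apply hinj; simpa using hx
    · rintro rfl; exact map_bot h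
  have lemA : ∀ (U : Set M) (b : L),
      frameStar (h '' U) b = h (sSup {u | u ∈ U ∧ b ⊓ h u ≠ ⊥}) := by
    intro U b
    rw [frameStar, map_sSup]
    congr 1
    ext c
    constructor
    · rintro ⟨⟨u, hu, rfl⟩, hne⟩; exact ⟨u, ⟨hu, hne⟩, rfl⟩
    · rintro ⟨u, ⟨hu, hne⟩, rfl⟩; exact ⟨⟨u, hu, rfl⟩, hne⟩
  have lemB : ∀ U ∈ 𝒰, ∀ b : L, b ≤ frameStar (h '' U) b := by
    intro U hU b
    have htop : sSup (h '' U) = ⊤ := by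
      rw [← map_sSup, hcov U hU, map_top]
    calc b = b ⊓ sSup (h '' U) := by rw [htop, inf_top_eq]
    _ ≤ frameStar (h '' U) b := by
        rw [inf_sSup_eq]
        apply iSup₂_le
        intro c hc
        by_cases hbc : b ⊓ c = ⊥
        · simp [hbc]
        · exact le_trans inf_le_right (le_sSup ⟨hc, hbc⟩)
  ext a
  simp only [Set.mem_range, Set.mem_setOf_eq]
  constructor
  · rintro ⟨w, rfl⟩
    apply le_antisymm
    · conv_lhs => rw [hadm w]
      rw [map_sSup]
      apply sSup_le
      rintro c ⟨v, ⟨U, hU, hstar⟩, rfl⟩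
      apply le_sSup
      refine ⟨U, hU, ?_⟩
      rw [lemA]
      have hset : {u | u ∈ U ∧ h v ⊓ h u ≠ ⊥} = {u | u ∈ U ∧ v ⊓ u ≠ ⊥} := by
        ext u
        simp only [Set.mem_setOf_eq, ← map_inf, ne_eq, hbot]
      rw [hset]
      exact OrderHomClass.mono h hstar
    · apply sSup_le
      rintro b ⟨U, hU, hstar⟩
      exact le_trans (lemB U hU b) hstar
  · intro ha
    refine ⟨sSup {w : M | h w ≤ a}, ?_⟩
    apply le_antisymm
    · rw [map_sSup]
      apply sSup_le
      rintro c ⟨w, hw, rfl⟩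
      exact hw
    · conv_lhs => rw [ha]
      apply sSup_le
      rintro b ⟨U, hU, hstar⟩
      refine le_trans (lemB U hU b) ?_
      rw [lemA] at hstar ⊢
      exact OrderHomClass.mono h (le_sSup hstar)
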